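/- (Lemma 2) Fix N ≥ 2 and subsets E, A ⊆ P. Suppose the kernel of the extended linear map T_{E,A} has dimension |E ∩ A| (equivalently, the rank of T_{E,A} equals (N − 1) + |E| + |A| − |E ∩ A|). Then for every δ : Fin N → ℝ with δ 0 = 0 and every e : P → ℝ supported on A with e p ≠ 0 for all p ∈ A, the equation system for (E, D δ + e) either has no solution, or A ⊆ E and its unique solution is (δ̂, ê) = (δ, e). -/

import Mathlib

abbrev Pair (N : ℕ) := {p : Fin N × Fin N // p.2 < p.1}

def Dmap {N : ℕ} (δ : Fin N → ℝ) : Pair N → ℝ := fun p => δ p.1.1 - δ p.1.2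

def ind {N : ℕ} (a : Pair N) : Pair N → ℝ := fun p => if p = a then 1 else 0

def IsSolution {N : ℕ} (hN : 0 < N) (E : Set (Pair N)) (b : Pair N → ℝ)
    (dh : Fin N → ℝ) (eh : Pair N → ℝ) : Prop :=
  dh ⟨0, hN⟩ = 0 ∧ (∀ p ∉ E, eh p = 0) ∧ ∀ p, Dmap dh p + eh p = b p

/-- The ambient linear map `(dh, eh, e') ↦ D dh + eh - e'`. -/
def Lfull (N : ℕ) : ((Fin N → ℝ) × (Pair N → ℝ) × (Pair N → ℝ)) →ₗ[ℝ] (Pair N → ℝ) where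
  toFun x := fun p => (x.1 p.1.1 - x.1 p.1.2) + x.2.1 p - x.2.2 p
  map_add' x y := by funext p; simp; ring
  map_smul' c x := by funext p; simp; ring

/-- The domain of the extended (re-vectorized) map: triples `(dh, eh, e')` with
`dh 0 = 0`, `eh` supported on `E`, `e'` supported on `A`. -/
noncomputable def Dom {N : ℕ} (hN : 0 < N) (E A : Set (Pair N)) :
    Submodule ℝ ((Fin N → ℝ) × (Pair N → ℝ) × (Pair N → ℝ)) where
  carrier := {x | x.1 ⟨0, hN⟩ = 0 ∧ (∀ p ∉ E, x.2.1 p = 0) ∧ (∀ p ∉ A, x.2.2 p = 0)}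
  add_mem' := by
    rintro a b ⟨ha0, ha1, ha2⟩ ⟨hb0, hb1, hb2⟩
    refine ⟨by simp [ha0, hb0], fun p hp => by simp [ha1 p hp, hb1 p hp],
      fun p hp => by simp [ha2 p hp, hb2 p hp]⟩
  zero_mem' := ⟨rfl, fun p _ => rfl, fun p _ => rfl⟩
  smul_mem' := by
    rintro c a ⟨ha0, ha1, ha2⟩
    refine ⟨by simp [ha0], fun p hp => by simp [ha1 p hp], fun p hp => by simp [ha2 p hp]⟩

/-- The extended (re-vectorized) linear map `T_{E,A} (dh, eh, e') = D dh + eh - e'`. -/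
noncomputable def Tmap {N : ℕ} (hN : 0 < N) (E A : Set (Pair N)) :
    Dom hN E A →ₗ[ℝ] (Pair N → ℝ) := (Lfull N).comp (Dom hN E A).subtype

/-!
Fault vectors on `E ∩ A` can be absorbed simultaneously by `ê` and `e′`, so `T_{E,A}` always
vanishes on the `|E ∩ A|`-dimensional space of triples `(0, v, v)` with `v` supported on
`E ∩ A`. The dimension hypothesis says that this is the whole kernel. If `(δ̂, ê)` solves the
system for `D δ + e`, then `(δ̂ - δ, ê, e)` lies in the kernel, hence `δ̂ = δ` and `ê = e`; and
since `e` vanishes nowhere on `A` while `ê` is supported on `E`, this forces `A ⊆ E`.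
-/

lemma Function.extend_val_eq_zero_of_notMem {α β : Type*} [Zero β] {S T : Set α}
    (hST : S ⊆ T) (v : S → β) {a : α} (ha : a ∉ T) : Function.extend ((↑) : S → α) v (0 : α → β) a = 0 :=
  Function.extend_apply' _ _ _ fun ⟨x, hx⟩ => ha (hx ▸ hST x.2)

namespace Tmap

variable {N : ℕ} (hN : 0 < N) (E A : Set (Pair N))

noncomputable def diag : (↥(E ∩ A) → ℝ) →ₗ[ℝ] Dom hN E A :=
  let ext := Function.ExtendByZero.linearMap ℝ ((↑) : ↥(E ∩ A) → Pair N)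
  LinearMap.codRestrict _ ((0 : _ →ₗ[ℝ] Fin N → ℝ).prod (ext.prod ext)) fun v =>
    ⟨rfl, fun _ => Function.extend_val_eq_zero_of_notMem Set.inter_subset_left v,
      fun _ => Function.extend_val_eq_zero_of_notMem Set.inter_subset_right v⟩

lemma coe_diag (v : ↥(E ∩ A) → ℝ) :
    (diag hN E A v : (Fin N → ℝ) × (Pair N → ℝ) × (Pair N → ℝ)) =
      (0, Function.extend (↑) v (0 : Pair N → ℝ), Function.extend (↑) v (0 : Pair N → ℝ)) := rfl

lemma diag_injective : Function.Injective (diag hN E A) := by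
  intro v w hvw
  funext q
  have h := congrFun (congrArg (fun x : Dom hN E A => x.1.2.1) hvw) q
  simpa [coe_diag, Subtype.val_injective.extend_apply] using h

lemma range_diag_le_ker : LinearMap.range (diag hN E A) ≤ LinearMap.ker (Tmap hN E A) := by
  rintro _ ⟨v, rfl⟩
  ext p
  simp [Tmap, Lfull, coe_diag]

variable {hN E A}

lemma range_diag_eq_ker
    (hker : Module.finrank ℝ (LinearMap.ker (Tmap hN E A)) = (E ∩ A).ncard) :
    LinearMap.range (diag hN E A) = LinearMap.ker (Tmap hN E A) := by
  refine Submodule.eq_of_le_of_finrank_eq (range_diag_le_ker hN E A) ?_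
  rw [LinearMap.finrank_range_of_inj (diag_injective hN E A), hker,
    Module.finrank_eq_nat_card_basis (Pi.basisFun ℝ _), Nat.card_coe_set_eq]

lemma eq_diag_of_mem_ker
    (hker : Module.finrank ℝ (LinearMap.ker (Tmap hN E A)) = (E ∩ A).ncard)
    {x : Dom hN E A} (hx : x ∈ LinearMap.ker (Tmap hN E A)) :
    x.1.1 = 0 ∧ x.1.2.1 = x.1.2.2 := by
  obtain ⟨v, rfl⟩ := (range_diag_eq_ker hker).ge hx
  exact ⟨rfl, rfl⟩

end Tmap

section Solutions

variable {N : ℕ} {hN : 0 < N} {E A : Set (Pair N)} {δ dh : Fin N → ℝ} {e eh : Pair N → ℝ}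

lemma IsSolution.eq_of_finrank_ker
    (hker : Module.finrank ℝ (LinearMap.ker (Tmap hN E A)) = (E ∩ A).ncard)
    (hδ : δ ⟨0, hN⟩ = 0) (he : ∀ p ∉ A, e p = 0)
    (hsol : IsSolution hN E (fun p => Dmap δ p + e p) dh eh) : dh = δ ∧ eh = e := by
  obtain ⟨hdh, heh, hD⟩ := hsol
  let x : Dom hN E A := ⟨(dh - δ, eh, e), by simp [hdh, hδ], heh, he⟩
  have hx : x ∈ LinearMap.ker (Tmap hN E A) := by
    ext p
    have hp := hD p
    simp only [Dmap] at hp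
    simp only [Tmap, Lfull, LinearMap.coe_comp, LinearMap.coe_mk, AddHom.coe_mk,
      Submodule.coe_subtype, Function.comp_apply, Pi.sub_apply, Pi.zero_apply, x]
    linarith
  obtain ⟨hx₁, hx₂⟩ := Tmap.eq_diag_of_mem_ker hker hx
  exact ⟨sub_eq_zero.mp hx₁, hx₂⟩

lemma isSolution_self (hAE : A ⊆ E) (hδ : δ ⟨0, hN⟩ = 0) (he : ∀ p ∉ A, e p = 0) :
    IsSolution hN E (fun p => Dmap δ p + e p) δ e :=
  ⟨hδ, fun p hp => he p (fun h => hp (hAE h)), fun _ => rfl⟩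

end Solutions

/-- Lemma 2: if the kernel of the extended linear map `T_{E,A}` has dimension `|E ∩ A|`,
then for every `δ` with `δ 0 = 0` and every fault vector `e` supported on `A` with
`e p ≠ 0` for all `p ∈ A`, the equation system for `(E, D δ + e)` either has no
solution, or `A ⊆ E` and its unique solution is `(δ, e)`. -/
theorem stmt_11 {N : ℕ} (hN : 2 ≤ N) (E A : Set (Pair N))
    (hker : Module.finrank ℝ
        (LinearMap.ker (Tmap (show 0 < N by omega) E A)) = (E ∩ A).ncard)
    (δ : Fin N → ℝ) (hδ : δ ⟨0, by omega⟩ = 0)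
    (e : Pair N → ℝ) (he : ∀ p ∉ A, e p = 0) (hA : ∀ p ∈ A, e p ≠ 0) :
    (¬ ∃ (dh : Fin N → ℝ) (eh : Pair N → ℝ),
        IsSolution (show 0 < N by omega) E (fun p => Dmap δ p + e p) dh eh) ∨
    (A ⊆ E ∧ ∀ (dh : Fin N → ℝ) (eh : Pair N → ℝ),
        IsSolution (show 0 < N by omega) E (fun p => Dmap δ p + e p) dh eh ↔
          dh = δ ∧ eh = e) := by
  refine or_iff_not_imp_left.mpr fun hsol => ?_
  obtain ⟨dh, eh, hs⟩ := not_not.mp hsol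
  obtain ⟨-, rfl⟩ := hs.eq_of_finrank_ker hker hδ he
  have hAE : A ⊆ E := fun p hp => by_contra fun hpE => hA p hp (hs.2.1 p hpE)
  exact ⟨hAE, fun dh' eh' => ⟨fun hs' => hs'.eq_of_finrank_ker hker hδ he,
    by rintro ⟨rfl, rfl⟩; exact isSolution_self hAE hδ he⟩⟩
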